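/- Let A be a block tridiagonal matrix with all superdiagonal blocks D_n and all subdiagonal blocks C_n invertible, and suppose A is diagonalizable with eigenvector matrix V built from the matrix polynomials P_n as in the closed-form construction. Define matrix polynomials P̃_n by the recurrence x·P̃_n(x) = D_{n-1}^T P̃_{n-1}(x) + B_n^T P̃_n(x) + C_n^T P̃_{n+1}(x) with P̃_{-1} = 0, P̃_0 = I_K. Then the transpose of the block matrix W with (n,m)-th block P̃_n(λ_m)H̃_m (where the columns of H̃_m form a basis of ker P̃_L(λ_m)) satisfies A^T W = W Λ; i.e., up to column scaling W^T is an inverse of V intertwining the eigendecomposition. -/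
import Mathlib

open Matrix

private lemma sum_fin_ite {L : ℕ} (t : ℕ) (g : Fin L → ℂ) :
    (∑ j : Fin L, if (j : ℕ) = t then g j else 0) =
      if ht : t < L then g ⟨t, ht⟩ else 0 := by
  split_ifs with ht
  · rw [Finset.sum_eq_single (⟨t, ht⟩ : Fin L)]
    · simp
    · intro b _ hb
      rw [if_neg]
      simpa [Fin.ext_iff] using hb
    · simp
  · apply Finset.sum_eq_zero
    intro j _
    rw [if_neg]
    intro h
    exact ht (h ▸ j.isLt)

/-- inverse eigenvector matrix. With `P̃ₙ` (here `Q`) generated by the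
transposed recurrence `x·Q n = D_{n-1}ᵀ Q (n-1) + Bₙᵀ Q n + Cₙᵀ Q (n+1)` and `H̃ m` bases of
`ker (Q L (lam m))`, the block matrix `W` with `(n,m)`-th block `Q n (lam m) * H̃ m`
satisfies `Aᵀ * W = W * Λ` (and is invertible), i.e. up to column scaling `Wᵀ` is an inverse
of the eigenvector matrix `V` intertwining the eigendecomposition. -/
theorem blockTridiag_inverse_eigenvector_matrix
    (K L M : ℕ) (hK : 0 < K) (hL : 0 < L)
    (Bm Cm Dm : ℕ → Matrix (Fin K) (Fin K) ℂ)
    (hD : ∀ n, IsUnit (Dm n)) (hC : ∀ n, IsUnit (Cm n))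
    (A : Matrix (Fin L × Fin K) (Fin L × Fin K) ℂ)
    (hA : ∀ (i j : Fin L) (k l : Fin K),
      A (i, k) (j, l) =
        if (i : ℕ) = (j : ℕ) then Bm (i : ℕ) k l
        else if (j : ℕ) = (i : ℕ) + 1 then Dm (i : ℕ) k l
        else if (i : ℕ) = (j : ℕ) + 1 then Cm (j : ℕ) k l
        else 0)
    (hDiag : ∃ (S : Matrix (Fin L × Fin K) (Fin L × Fin K) ℂ) (d : Fin L × Fin K → ℂ),
      IsUnit S ∧ A = S * Matrix.diagonal d * S⁻¹)
    (Q : ℕ → ℂ → Matrix (Fin K) (Fin K) ℂ)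
    (hQ0 : ∀ x, Q 0 x = 1)
    (hQrec : ∀ n x, x • Q n x =
      (if n = 0 then 0 else (Dm (n - 1))ᵀ * Q (n - 1) x) +
        (Bm n)ᵀ * Q n x + (Cm n)ᵀ * Q (n + 1) x)
    (lam : Fin M → ℂ) (hlam : Function.Injective lam)
    (hEig : ∀ m, ∃ v : Fin L × Fin K → ℂ, v ≠ 0 ∧ A.mulVec v = lam m • v)
    (a : Fin M → ℕ)
    (hsum : ∑ m, a m = K * L)
    (Ht : (m : Fin M) → Matrix (Fin K) (Fin (a m)) ℂ)
    (hHindep : ∀ m, LinearIndependent ℂ (fun j : Fin (a m) => fun k : Fin K => Ht m k j))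
    (hHspan : ∀ m, Submodule.span ℂ
        (Set.range (fun j : Fin (a m) => fun k : Fin K => Ht m k j))
      = LinearMap.ker (Matrix.mulVecLin (Q L (lam m))))
    (W : Matrix (Fin L × Fin K) ((m : Fin M) × Fin (a m)) ℂ)
    (hW : ∀ (p : Fin L × Fin K) (s : (m : Fin M) × Fin (a m)),
      W p s = (Q (p.1 : ℕ) (lam s.1) * Ht s.1) p.2 s.2) :
    Function.Bijective (Matrix.mulVecLin W) ∧
    Aᵀ * W = W * Matrix.diagonal (fun s : (m : Fin M) × Fin (a m) => lam s.1) := by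
  classical
  -- `Q L (lam m) * Ht m = 0` since the columns of `Ht m` lie in the kernel
  have hQLH : ∀ m, Q L (lam m) * Ht m = 0 := by
    intro m
    ext k j
    have hmem : (fun k : Fin K => Ht m k j) ∈
        LinearMap.ker (Matrix.mulVecLin (Q L (lam m))) := by
      rw [← hHspan m]
      exact Submodule.subset_span ⟨j, rfl⟩
    have h0 : (Q L (lam m)).mulVec (fun k : Fin K => Ht m k j) = 0 := by
      simpa using hmem
    have := congrFun h0 k
    simpa [Matrix.mulVec, Matrix.mul_apply, dotProduct] using this
  -- the intertwining relation
  have hint : Aᵀ * W =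
      W * Matrix.diagonal (fun s : (m : Fin M) × Fin (a m) => lam s.1) := by
    ext ⟨i, k⟩ ⟨m, j⟩
    rw [Matrix.mul_diagonal, Matrix.mul_apply, Fintype.sum_prod_type]
    have key : ∀ (j' : Fin L) (l : Fin K),
        Aᵀ (i, k) (j', l) * W (j', l) ⟨m, j⟩ =
          (if (j' : ℕ) = (i : ℕ) then
              Bm (i : ℕ) l k * (Q (i : ℕ) (lam m) * Ht m) l j else 0) +
          (if (j' : ℕ) + 1 = (i : ℕ) then
              Dm ((i : ℕ) - 1) l k * (Q ((i : ℕ) - 1) (lam m) * Ht m) l j else 0) +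
          (if (j' : ℕ) = (i : ℕ) + 1 then
              Cm (i : ℕ) l k * (Q ((i : ℕ) + 1) (lam m) * Ht m) l j else 0) := by
      intro j' l
      rw [Matrix.transpose_apply, hA, hW]
      split_ifs <;>
        first
          | (exfalso; omega)
          | (rw [show (j' : ℕ) = (i : ℕ) by omega]; ring)
          | (rw [show (j' : ℕ) = (i : ℕ) - 1 by omega]; ring)
          | (rw [show (j' : ℕ) = (i : ℕ) + 1 by omega]; ring)
          | ring
    simp only [key]
    rw [Finset.sum_comm]
    simp only [Finset.sum_add_distrib]
    have e1 : ∀ l : Fin K, (∑ j' : Fin L, if (j' : ℕ) = (i : ℕ) then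
        Bm (i : ℕ) l k * (Q (i : ℕ) (lam m) * Ht m) l j else 0) =
        Bm (i : ℕ) l k * (Q (i : ℕ) (lam m) * Ht m) l j := by
      intro l
      rw [sum_fin_ite ((i : ℕ)) (fun _ => Bm (i : ℕ) l k * (Q (i : ℕ) (lam m) * Ht m) l j),
        dif_pos i.isLt]
    have e2 : ∀ l : Fin K, (∑ j' : Fin L, if (j' : ℕ) + 1 = (i : ℕ) then
        Dm ((i : ℕ) - 1) l k * (Q ((i : ℕ) - 1) (lam m) * Ht m) l j else 0) =
        (if (i : ℕ) = 0 then 0 else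
          Dm ((i : ℕ) - 1) l k * (Q ((i : ℕ) - 1) (lam m) * Ht m) l j) := by
      intro l
      by_cases h0 : (i : ℕ) = 0
      · rw [if_pos h0]
        apply Finset.sum_eq_zero
        intro j' _
        rw [if_neg (by omega)]
      · rw [if_neg h0]
        have hiff : ∀ j' : Fin L, ((j' : ℕ) + 1 = (i : ℕ)) = ((j' : ℕ) = (i : ℕ) - 1) := by
          intro j'; apply propext; omega
        simp only [hiff]
        rw [sum_fin_ite ((i : ℕ) - 1)
          (fun _ => Dm ((i : ℕ) - 1) l k * (Q ((i : ℕ) - 1) (lam m) * Ht m) l j),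
          dif_pos (by omega : (i : ℕ) - 1 < L)]
    have e3 : ∀ l : Fin K, (∑ j' : Fin L, if (j' : ℕ) = (i : ℕ) + 1 then
        Cm (i : ℕ) l k * (Q ((i : ℕ) + 1) (lam m) * Ht m) l j else 0) =
        Cm (i : ℕ) l k * (Q ((i : ℕ) + 1) (lam m) * Ht m) l j := by
      intro l
      rw [sum_fin_ite ((i : ℕ) + 1)
        (fun _ => Cm (i : ℕ) l k * (Q ((i : ℕ) + 1) (lam m) * Ht m) l j)]
      by_cases hi : (i : ℕ) + 1 < L
      · rw [dif_pos hi]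
      · rw [dif_neg hi]
        have hiL : (i : ℕ) + 1 = L := by omega
        have hz : (Q ((i : ℕ) + 1) (lam m) * Ht m) l j = 0 := by
          rw [hiL, hQLH m, Matrix.zero_apply]
        rw [hz, mul_zero]
    simp only [e1, e2, e3]
    -- use the recurrence
    have expand : ∀ (Dmat : Matrix (Fin K) (Fin K) ℂ) (n : ℕ),
        (Dmatᵀ * Q n (lam m) * Ht m) k j =
          ∑ l : Fin K, Dmat l k * (Q n (lam m) * Ht m) l j := by
      intro Dmat n
      rw [Matrix.mul_assoc, Matrix.mul_apply]
      exact Finset.sum_congr rfl fun l _ => by rw [Matrix.transpose_apply]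
    have hrec := hQrec (i : ℕ) (lam m)
    by_cases h0 : (i : ℕ) = 0
    · rw [if_pos h0] at hrec
      have hE := congrArg (fun X => (X * Ht m) k j) hrec
      simp only [Matrix.add_mul, Matrix.smul_mul, Matrix.zero_mul, Matrix.add_apply,
        Matrix.zero_apply, Matrix.smul_apply, smul_eq_mul, zero_add] at hE
      rw [expand, expand] at hE
      rw [show W (i, k) ⟨m, j⟩ = (Q (i : ℕ) (lam m) * Ht m) k j from hW _ _]
      simp only [if_pos h0, Finset.sum_const_zero, add_zero]
      exact hE.symm.trans (mul_comm _ _)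
    · rw [if_neg h0] at hrec
      have hE := congrArg (fun X => (X * Ht m) k j) hrec
      simp only [Matrix.add_mul, Matrix.smul_mul, Matrix.add_apply,
        Matrix.smul_apply, smul_eq_mul] at hE
      rw [expand, expand, expand] at hE
      rw [show W (i, k) ⟨m, j⟩ = (Q (i : ℕ) (lam m) * Ht m) k j from hW _ _]
      simp only [if_neg h0]
      rw [add_comm (∑ x : Fin K, Bm (i : ℕ) x k * (Q (i : ℕ) (lam m) * Ht m) x j)
        (∑ x : Fin K, Dm ((i : ℕ) - 1) x k * (Q ((i : ℕ) - 1) (lam m) * Ht m) x j)]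
      exact hE.symm.trans (mul_comm _ _)
  refine ⟨?_, hint⟩
  -- bijectivity
  have hdim : Module.finrank ℂ (((m : Fin M) × Fin (a m)) → ℂ) =
      Module.finrank ℂ ((Fin L × Fin K) → ℂ) := by
    rw [Module.finrank_fintype_fun_eq_card, Module.finrank_fintype_fun_eq_card,
      Fintype.card_sigma, Fintype.card_prod, Fintype.card_fin, Fintype.card_fin]
    simp only [Fintype.card_fin]
    rw [hsum]
    ring
  have hinj : Function.Injective (Matrix.mulVecLin W) := by
    rw [← LinearMap.ker_eq_bot, LinearMap.ker_eq_bot']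
    intro c hc
    have hc' : W.mulVec c = 0 := by simpa using hc
    set v : Fin M → (Fin L × Fin K → ℂ) :=
      fun m p => ∑ j : Fin (a m), W p ⟨m, j⟩ * c ⟨m, j⟩ with hv
    have hvsum : ∑ m, v m = 0 := by
      funext p
      have hcp := congrFun hc' p
      rw [Matrix.mulVec, dotProduct] at hcp
      calc (∑ m, v m) p = ∑ m, ∑ j, W p ⟨m, j⟩ * c ⟨m, j⟩ := by
            simp [hv, Finset.sum_apply]
        _ = ∑ s : (m : Fin M) × Fin (a m), W p s * c s := by
            rw [← Finset.univ_sigma_univ, Finset.sum_sigma]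
        _ = 0 := hcp
    have heig : ∀ m, Matrix.mulVecLin Aᵀ (v m) = lam m • v m := by
      intro m
      funext p
      rw [Matrix.mulVecLin_apply]
      calc Aᵀ.mulVec (v m) p
          = ∑ q, Aᵀ p q * ∑ j, W q ⟨m, j⟩ * c ⟨m, j⟩ := by
            rw [Matrix.mulVec, dotProduct]
        _ = ∑ q, ∑ j, Aᵀ p q * (W q ⟨m, j⟩ * c ⟨m, j⟩) := by
            simp only [Finset.mul_sum]
        _ = ∑ j, ∑ q, Aᵀ p q * (W q ⟨m, j⟩ * c ⟨m, j⟩) := Finset.sum_comm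
        _ = ∑ j, (∑ q, Aᵀ p q * W q ⟨m, j⟩) * c ⟨m, j⟩ := by
            refine Finset.sum_congr rfl fun j' _ => ?_
            rw [Finset.sum_mul]
            exact Finset.sum_congr rfl fun q _ => by ring
        _ = ∑ j, ((Aᵀ * W) p ⟨m, j⟩) * c ⟨m, j⟩ := by
            simp only [Matrix.mul_apply]
        _ = ∑ j, (W p ⟨m, j⟩ * lam m) * c ⟨m, j⟩ := by
            rw [hint]
            simp only [Matrix.mul_diagonal]
        _ = lam m * ∑ j, W p ⟨m, j⟩ * c ⟨m, j⟩ := by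
            rw [Finset.mul_sum]
            exact Finset.sum_congr rfl fun j' _ => by ring
        _ = (lam m • v m) p := by
            rw [Pi.smul_apply, smul_eq_mul]
    have hv0 : ∀ m, v m = 0 := by
      by_contra hcon
      push_neg at hcon
      obtain ⟨m0, hm0⟩ := hcon
      set S : Finset (Fin M) := Finset.univ.filter (fun m => v m ≠ 0) with hS
      have hli : LinearIndependent ℂ (fun m : {x // x ∈ S} => v m) := by
        apply Module.End.eigenvectors_linearIndependent' (Matrix.mulVecLin Aᵀ)
          (fun m : {x // x ∈ S} => lam m)
          (fun x y hxy => Subtype.ext (hlam hxy))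
        intro m
        refine ⟨?_, ?_⟩
        · rw [Module.End.mem_eigenspace_iff]
          exact heig m
        · have := m.2
          simp only [hS, Finset.mem_filter, Finset.mem_univ, true_and] at this
          exact this
      have hsum0 : ∑ m : {x // x ∈ S}, (1 : ℂ) • v m = 0 := by
        simp only [one_smul]
        rw [Finset.sum_coe_sort S v]
        rw [show ∑ m ∈ S, v m = ∑ m, v m from ?_]
        · exact hvsum
        · rw [hS]
          exact Finset.sum_filter_ne_zero Finset.univ
      have := Fintype.linearIndependent_iff.mp hli (fun _ => 1)
        (by simpa using hsum0) ⟨m0, by simp [hS, hm0]⟩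
      exact one_ne_zero this
    funext s
    obtain ⟨m, j⟩ := s
    have h0 : ∀ k : Fin K, (∑ j' : Fin (a m), c ⟨m, j'⟩ * Ht m k j') = 0 := by
      intro k
      have hvmk := congrFun (hv0 m) (⟨0, hL⟩, k)
      rw [Pi.zero_apply] at hvmk
      have hWe : ∀ j' : Fin (a m), W (⟨0, hL⟩, k) ⟨m, j'⟩ = Ht m k j' := by
        intro j'
        rw [hW]
        simp [hQ0]
      calc (∑ j' : Fin (a m), c ⟨m, j'⟩ * Ht m k j')
          = ∑ j' : Fin (a m), W (⟨0, hL⟩, k) ⟨m, j'⟩ * c ⟨m, j'⟩ := by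
            exact Finset.sum_congr rfl fun j' _ => by rw [hWe j']; ring
        _ = 0 := hvmk
    have hli := Fintype.linearIndependent_iff.mp (hHindep m) (fun j' => c ⟨m, j'⟩)
    have hzero : ∑ j' : Fin (a m), c ⟨m, j'⟩ • (fun k : Fin K => Ht m k j') = 0 := by
      funext k
      simpa [Finset.sum_apply, smul_eq_mul] using h0 k
    exact hli hzero j
  exact ⟨hinj, (LinearMap.injective_iff_surjective_of_finrank_eq_finrank hdim).mp hinj⟩
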